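/- Average WEF recursion (Theorem 2): Let C1, C2 be codes of length n with weight distributions A^1_{d}, A^2_{d}, and let Π be a uniformly random permutation of n coordinates. Then the expected weight enumerating function of the code {(xΠ + y, y) : x ∈ C1, y ∈ C2}, computed as E_Π[Σ_{x ∈ C1} Σ_{y ∈ C2} Y^{w(xΠ+y)+w(y)}], equals Σ_{d1,d2} A^1_{d1} A^2_{d2} Σ_{k=max(0,d1+d2-n)}^{min(d1,d2)} [C(d2,k)C(n-d2,d1-k)/C(n,d1)] Y^{d1+2d2-2k}. -/

import Mathlib

open Finset

/-- Hamming weight of a binary vector. -/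
def wt {n : ℕ} (x : Fin n → ZMod 2) : ℕ :=
  (Finset.univ.filter (fun i => x i ≠ 0)).card

def supp {n : ℕ} (x : Fin n → ZMod 2) : Finset (Fin n) :=
  Finset.univ.filter (fun i => x i ≠ 0)

lemma wt_eq {n : ℕ} (x : Fin n → ZMod 2) : wt x = (supp x).card := rfl

lemma wt_le {n : ℕ} (x : Fin n → ZMod 2) : wt x ≤ n := by
  simpa [wt] using Finset.card_filter_le Finset.univ (fun i => x i ≠ 0)

lemma wt_add_eq {n : ℕ} (a b : Fin n → ZMod 2) :
    wt (a + b) + (supp a ∩ supp b).card + (supp a ∩ supp b).card = wt a + wt b := by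
  have hset : (Finset.univ.filter (fun i => (a + b) i ≠ 0)) = symmDiff (supp a) (supp b) := by
    ext i
    simp only [Finset.mem_filter, Finset.mem_univ, true_and, Finset.mem_symmDiff, supp,
      Pi.add_apply]
    have h2 : ∀ u v : ZMod 2, (u + v ≠ 0 ↔ (u ≠ 0 ∧ ¬v ≠ 0 ∨ v ≠ 0 ∧ ¬u ≠ 0)) := by decide
    exact h2 _ _
  have hsd : symmDiff (supp a) (supp b) = (supp a ∪ supp b) \ (supp a ∩ supp b) := by
    rw [symmDiff_eq_sup_sdiff_inf]; rfl
  have hcard : (supp a ∪ supp b).card + (supp a ∩ supp b).card = (supp a).card + (supp b).card :=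
    Finset.card_union_add_card_inter _ _
  have hsub : supp a ∩ supp b ⊆ supp a ∪ supp b :=
    (Finset.inter_subset_left).trans Finset.subset_union_left
  have : ((supp a ∪ supp b) \ (supp a ∩ supp b)).card
      = (supp a ∪ supp b).card - (supp a ∩ supp b).card := Finset.card_sdiff_of_subset hsub
  have hle : (supp a ∩ supp b).card ≤ (supp a ∪ supp b).card := Finset.card_le_card hsub
  rw [wt, hset, hsd, this, wt_eq, wt_eq]
  omega

def permFiberEquiv {n : ℕ} (S0 S : Finset (Fin n)) :
    {π : Equiv.Perm (Fin n) // ∀ i, π i ∈ S0 ↔ i ∈ S}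
      ≃ ({i // i ∈ S} ≃ {i // i ∈ S0}) × ({i // i ∉ S} ≃ {i // i ∉ S0}) where
  toFun := fun ⟨π, h⟩ =>
    (π.subtypeEquiv (fun i => (h i).symm),
     π.subtypeEquiv (fun i => not_iff_not.mpr (h i).symm))
  invFun := fun (e₁, e₂) =>
    ⟨Equiv.subtypeCongr e₁ e₂, by
      intro i
      by_cases hi : i ∈ S
      · simp [Equiv.subtypeCongr, hi, (e₁ ⟨i, hi⟩).2]
      · simp [Equiv.subtypeCongr, hi, (e₂ ⟨i, hi⟩).2]⟩
  left_inv := by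
    rintro ⟨π, h⟩
    ext i
    by_cases hi : i ∈ S <;> simp [Equiv.subtypeCongr, Equiv.subtypeEquiv, hi]
  right_inv := by
    rintro ⟨e₁, e₂⟩
    refine Prod.ext ?_ ?_
    · ext i
      simp [Equiv.subtypeCongr, Equiv.subtypeEquiv, i.2]
    · ext i
      simp [Equiv.subtypeCongr, Equiv.subtypeEquiv, i.2]

lemma card_perm_fiber {n : ℕ} (S0 S : Finset (Fin n)) (h : S.card = S0.card) :
    (Finset.univ.filter (fun π : Equiv.Perm (Fin n) => ∀ i, π i ∈ S0 ↔ i ∈ S)).card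
      = S.card.factorial * (n - S.card).factorial := by
  have h1 : Fintype.card {i : Fin n // i ∈ S} = S.card := Fintype.card_coe S
  have h1' : Fintype.card {i : Fin n // i ∈ S0} = S0.card := Fintype.card_coe S0
  have h2 : Fintype.card {i : Fin n // i ∉ S} = n - S.card := by
    rw [Fintype.card_subtype_compl]; simp [h1]
  have h2' : Fintype.card {i : Fin n // i ∉ S0} = n - S0.card := by
    rw [Fintype.card_subtype_compl]; simp [h1']
  have e1 : {i : Fin n // i ∈ S} ≃ {i : Fin n // i ∈ S0} :=
    Fintype.equivOfCardEq (by rw [h1, h1', h])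
  have e2 : {i : Fin n // i ∉ S} ≃ {i : Fin n // i ∉ S0} :=
    Fintype.equivOfCardEq (by rw [h2, h2', h])
  calc (Finset.univ.filter (fun π : Equiv.Perm (Fin n) => ∀ i, π i ∈ S0 ↔ i ∈ S)).card
      = Fintype.card {π : Equiv.Perm (Fin n) // ∀ i, π i ∈ S0 ↔ i ∈ S} :=
        (Fintype.card_subtype _).symm
    _ = Fintype.card (({i : Fin n // i ∈ S} ≃ {i : Fin n // i ∈ S0})
          × ({i : Fin n // i ∉ S} ≃ {i : Fin n // i ∉ S0})) :=
        Fintype.card_congr (permFiberEquiv S0 S)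
    _ = S.card.factorial * (n - S.card).factorial := by
        rw [Fintype.card_prod, Fintype.card_equiv e1, Fintype.card_equiv e2, h1, h2]

lemma card_subsets_inter {n : ℕ} (T : Finset (Fin n)) (d1 k : ℕ) (hk : k ≤ d1) :
    (((Finset.univ : Finset (Fin n)).powersetCard d1).filter
        (fun S => (S ∩ T).card = k)).card
      = T.card.choose k * (n - T.card).choose (d1 - k) := by
  rw [show T.card.choose k * (n - T.card).choose (d1 - k)
      = ((T.powersetCard k) ×ˢ (Tᶜ.powersetCard (d1 - k))).card by
    rw [Finset.card_product, Finset.card_powersetCard, Finset.card_powersetCard,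
      Finset.card_compl, Fintype.card_fin]]
  apply Finset.card_nbij' (fun S => (S ∩ T, S \ T)) (fun p => p.1 ∪ p.2)
  · intro S hS
    simp only [Finset.mem_coe, Finset.mem_filter, Finset.mem_powersetCard] at hS
    obtain ⟨⟨-, hcard⟩, hint⟩ := hS
    simp only [Finset.mem_coe, Finset.mem_product, Finset.mem_powersetCard]
    refine ⟨⟨Finset.inter_subset_right, hint⟩, ?_, ?_⟩
    · intro i hi
      simp only [Finset.mem_sdiff] at hi
      simp [hi.2]
    · have := Finset.card_inter_add_card_sdiff S T
      omega
  · intro p hp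
    simp only [Finset.mem_coe, Finset.mem_product, Finset.mem_powersetCard] at hp
    obtain ⟨⟨hAT, hA⟩, hBT, hB⟩ := hp
    have hdisj : Disjoint p.1 p.2 := by
      apply Finset.disjoint_left.mpr
      intro i hiA hiB
      exact (Finset.mem_compl.mp (hBT hiB)) (hAT hiA)
    simp only [Finset.mem_coe, Finset.mem_filter, Finset.mem_powersetCard]
    refine ⟨⟨Finset.subset_univ _, ?_⟩, ?_⟩
    · rw [Finset.card_union_of_disjoint hdisj, hA, hB]; omega
    · have : (p.1 ∪ p.2) ∩ T = p.1 := by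
        rw [Finset.union_inter_distrib_right,
          Finset.inter_eq_left.mpr hAT]
        have : p.2 ∩ T = ∅ := by
          apply Finset.eq_empty_of_forall_notMem
          intro i hi
          simp only [Finset.mem_inter] at hi
          exact (Finset.mem_compl.mp (hBT hi.1)) hi.2
        rw [this, Finset.union_empty]
      rw [this, hA]
  · intro S hS
    ext i
    by_cases hi : i ∈ T <;> simp [hi]
  · intro p hp
    simp only [Finset.mem_coe, Finset.mem_product, Finset.mem_powersetCard] at hp
    obtain ⟨⟨hAT, hA⟩, hBT, hB⟩ := hp
    have h1 : (p.1 ∪ p.2) ∩ T = p.1 := by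
      rw [Finset.union_inter_distrib_right, Finset.inter_eq_left.mpr hAT]
      have : p.2 ∩ T = ∅ := by
        apply Finset.eq_empty_of_forall_notMem
        intro i hi
        simp only [Finset.mem_inter] at hi
        exact (Finset.mem_compl.mp (hBT hi.1)) hi.2
      rw [this, Finset.union_empty]
    have h2 : (p.1 ∪ p.2) \ T = p.2 := by
      rw [Finset.union_sdiff_distrib]
      have hA' : p.1 \ T = ∅ := Finset.sdiff_eq_empty_iff_subset.mpr hAT
      have hB' : p.2 \ T = p.2 := by
        apply Finset.sdiff_eq_self_iff_disjoint.mpr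
        apply Finset.disjoint_left.mpr
        intro i hi hiT
        exact (Finset.mem_compl.mp (hBT hi)) hiT
      rw [hA', hB', Finset.empty_union]
    exact Prod.ext h1 h2

lemma perm_sum {n : ℕ} (x y : Fin n → ZMod 2) (Y : ℝ) :
    (∑ π : Equiv.Perm (Fin n), Y ^ (wt ((fun i => x (π i)) + y) + wt y))
      = ∑ k ∈ Finset.Icc (wt x + wt y - n) (min (wt x) (wt y)),
          (((wt x).factorial * (n - wt x).factorial *
            ((wt y).choose k * (n - wt y).choose (wt x - k)) : ℕ) : ℝ)
            * Y ^ (wt x + 2 * wt y - 2 * k) := by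
  have hsupp : ∀ π : Equiv.Perm (Fin n),
      supp (fun i => x (π i)) = (supp x).image π.symm := by
    intro π
    ext i
    simp only [supp, Finset.mem_filter, Finset.mem_univ, true_and, Finset.mem_image]
    constructor
    · intro h
      exact ⟨π i, h, π.symm_apply_apply i⟩
    · rintro ⟨j, hj, rfl⟩
      simpa using hj
  have hcard : ∀ π : Equiv.Perm (Fin n), (supp (fun i => x (π i))).card = wt x := by
    intro π
    rw [hsupp π, Finset.card_image_of_injective _ π.symm.injective, wt_eq]
  have hexp : ∀ π : Equiv.Perm (Fin n),
      wt ((fun i => x (π i)) + y) + wt y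
        = wt x + 2 * wt y - 2 * ((supp (fun i => x (π i)) ∩ supp y).card) := by
    intro π
    have h1 := wt_add_eq (fun i => x (π i)) y
    have h2 : (supp (fun i => x (π i)) ∩ supp y).card ≤ wt x := by
      rw [← hcard π]
      exact Finset.card_le_card Finset.inter_subset_left
    have h3 : (supp (fun i => x (π i)) ∩ supp y).card ≤ wt y := by
      rw [wt_eq]
      exact Finset.card_le_card Finset.inter_subset_right
    rw [wt_eq (fun i => x (π i)), hcard π] at h1
    omega
  calc (∑ π : Equiv.Perm (Fin n), Y ^ (wt ((fun i => x (π i)) + y) + wt y))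
      = ∑ π : Equiv.Perm (Fin n),
          Y ^ (wt x + 2 * wt y - 2 * ((supp (fun i => x (π i)) ∩ supp y).card)) := by
        exact Finset.sum_congr rfl (fun π _ => by rw [hexp π])
    _ = ∑ S ∈ (Finset.univ : Finset (Fin n)).powersetCard (wt x),
          ∑ π ∈ Finset.univ.filter (fun π : Equiv.Perm (Fin n) =>
              supp (fun i => x (π i)) = S),
            Y ^ (wt x + 2 * wt y - 2 * ((supp (fun i => x (π i)) ∩ supp y).card)) := by
        refine (Finset.sum_fiberwise_of_maps_to ?_ _).symm
        intro π _
        rw [Finset.mem_powersetCard]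
        exact ⟨Finset.subset_univ _, hcard π⟩
    _ = ∑ S ∈ (Finset.univ : Finset (Fin n)).powersetCard (wt x),
          (((wt x).factorial * (n - wt x).factorial : ℕ) : ℝ)
            * Y ^ (wt x + 2 * wt y - 2 * (S ∩ supp y).card) := by
        refine Finset.sum_congr rfl (fun S hS => ?_)
        rw [Finset.mem_powersetCard] at hS
        have hfib : Finset.univ.filter (fun π : Equiv.Perm (Fin n) =>
              supp (fun i => x (π i)) = S)
            = Finset.univ.filter (fun π : Equiv.Perm (Fin n) =>
              ∀ i, π i ∈ supp x ↔ i ∈ S) := by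
          refine Finset.filter_congr (fun π _ => ?_)
          rw [Finset.ext_iff]
          simp [supp]
        have : ∀ π ∈ Finset.univ.filter (fun π : Equiv.Perm (Fin n) =>
              supp (fun i => x (π i)) = S),
            Y ^ (wt x + 2 * wt y - 2 * ((supp (fun i => x (π i)) ∩ supp y).card))
              = Y ^ (wt x + 2 * wt y - 2 * (S ∩ supp y).card) := by
          intro π hπ
          rw [Finset.mem_filter] at hπ
          rw [hπ.2]
        rw [Finset.sum_congr rfl this, Finset.sum_const, hfib,
          card_perm_fiber (supp x) S (by rw [hS.2, wt_eq]), hS.2, nsmul_eq_mul]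
    _ = ∑ k ∈ Finset.Icc (wt x + wt y - n) (min (wt x) (wt y)),
          ∑ S ∈ ((Finset.univ : Finset (Fin n)).powersetCard (wt x)).filter
              (fun S => (S ∩ supp y).card = k),
            (((wt x).factorial * (n - wt x).factorial : ℕ) : ℝ)
              * Y ^ (wt x + 2 * wt y - 2 * (S ∩ supp y).card) := by
        refine (Finset.sum_fiberwise_of_maps_to ?_ _).symm
        intro S hS
        rw [Finset.mem_powersetCard] at hS
        rw [Finset.mem_Icc]
        have h2 : (S ∩ supp y).card ≤ wt x := hS.2 ▸ Finset.card_le_card Finset.inter_subset_left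
        have h3 : (S ∩ supp y).card ≤ wt y := by
          rw [wt_eq]
          exact Finset.card_le_card Finset.inter_subset_right
        have h4 : (S ∪ supp y).card + (S ∩ supp y).card = S.card + (supp y).card :=
          Finset.card_union_add_card_inter _ _
        have h5 : (S ∪ supp y).card ≤ n := by
          simpa using Finset.card_le_univ (S ∪ supp y)
        have h6 : (supp y).card = wt y := (wt_eq y).symm
        rw [hS.2] at h4
        omega
    _ = ∑ k ∈ Finset.Icc (wt x + wt y - n) (min (wt x) (wt y)),
          (((wt x).factorial * (n - wt x).factorial *
            ((wt y).choose k * (n - wt y).choose (wt x - k)) : ℕ) : ℝ)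
            * Y ^ (wt x + 2 * wt y - 2 * k) := by
        refine Finset.sum_congr rfl (fun k hk => ?_)
        rw [Finset.mem_Icc] at hk
        have hk1 : k ≤ wt x := le_trans hk.2 (min_le_left _ _)
        have : ∀ S ∈ ((Finset.univ : Finset (Fin n)).powersetCard (wt x)).filter
              (fun S => (S ∩ supp y).card = k),
            (((wt x).factorial * (n - wt x).factorial : ℕ) : ℝ)
              * Y ^ (wt x + 2 * wt y - 2 * (S ∩ supp y).card)
            = (((wt x).factorial * (n - wt x).factorial : ℕ) : ℝ)
              * Y ^ (wt x + 2 * wt y - 2 * k) := by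
          intro S hS
          rw [Finset.mem_filter] at hS
          rw [hS.2]
        rw [Finset.sum_congr rfl this, Finset.sum_const,
          card_subsets_inter (supp y) (wt x) k hk1, nsmul_eq_mul]
        have h6 : (supp y).card = wt y := (wt_eq y).symm
        rw [h6]
        push_cast
        ring

lemma perm_sum_div {n : ℕ} (x y : Fin n → ZMod 2) (Y : ℝ) :
    (∑ π : Equiv.Perm (Fin n), Y ^ (wt ((fun i => x (π i)) + y) + wt y))
        / (Nat.factorial n : ℝ)
      = ∑ k ∈ Finset.Icc (wt x + wt y - n) (min (wt x) (wt y)),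
          (((wt y).choose k * (n - wt y).choose (wt x - k) : ℝ)
              / (n.choose (wt x) : ℝ))
            * Y ^ (wt x + 2 * wt y - 2 * k) := by
  rw [perm_sum, Finset.sum_div]
  refine Finset.sum_congr rfl (fun k _ => ?_)
  have hle : wt x ≤ n := wt_le x
  have hfact : (n.factorial : ℝ)
      = (n.choose (wt x) : ℝ) * ((wt x).factorial : ℝ) * ((n - wt x).factorial : ℝ) := by
    exact_mod_cast (Nat.choose_mul_factorial_mul_factorial hle).symm
  have h1 : ((wt x).factorial : ℝ) ≠ 0 := Nat.cast_ne_zero.mpr (Nat.factorial_ne_zero _)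
  have h2 : ((n - wt x).factorial : ℝ) ≠ 0 := Nat.cast_ne_zero.mpr (Nat.factorial_ne_zero _)
  have h3 : (n.choose (wt x) : ℝ) ≠ 0 := Nat.cast_ne_zero.mpr (Nat.choose_pos hle).ne'
  rw [hfact]
  push_cast
  field_simp

/-- Theorem 2: the ensemble-average WEF of the interleaved Plotkin construction
`{(xΠ + y, y)}` in terms of the weight distributions of `C1` and `C2`. -/
theorem average_wef_recursion {n : ℕ} (C1 C2 : Finset (Fin n → ZMod 2)) (Y : ℝ) :
    (∑ π : Equiv.Perm (Fin n), ∑ x ∈ C1, ∑ y ∈ C2,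
        Y ^ (wt ((fun i => x (π i)) + y) + wt y)) / (Nat.factorial n : ℝ)
      = ∑ d1 ∈ Finset.range (n + 1), ∑ d2 ∈ Finset.range (n + 1),
          ((C1.filter (fun c => wt c = d1)).card : ℝ)
            * ((C2.filter (fun c => wt c = d2)).card : ℝ)
            * ∑ k ∈ Finset.Icc (d1 + d2 - n) (min d1 d2),
                ((d2.choose k * (n - d2).choose (d1 - k) : ℝ) / (n.choose d1 : ℝ))
                  * Y ^ (d1 + 2 * d2 - 2 * k) := by
  have hswap : (∑ π : Equiv.Perm (Fin n), ∑ x ∈ C1, ∑ y ∈ C2,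
        Y ^ (wt ((fun i => x (π i)) + y) + wt y))
      = ∑ x ∈ C1, ∑ y ∈ C2, ∑ π : Equiv.Perm (Fin n),
          Y ^ (wt ((fun i => x (π i)) + y) + wt y) := by
    rw [Finset.sum_comm]
    exact Finset.sum_congr rfl (fun x _ => Finset.sum_comm)
  rw [hswap, Finset.sum_div]
  have hstep : ∀ x ∈ C1,
      (∑ y ∈ C2, ∑ π : Equiv.Perm (Fin n),
          Y ^ (wt ((fun i => x (π i)) + y) + wt y)) / (Nat.factorial n : ℝ)
        = ∑ y ∈ C2, ∑ k ∈ Finset.Icc (wt x + wt y - n) (min (wt x) (wt y)),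
            (((wt y).choose k * (n - wt y).choose (wt x - k) : ℝ)
                / (n.choose (wt x) : ℝ))
              * Y ^ (wt x + 2 * wt y - 2 * k) := by
    intro x _
    rw [Finset.sum_div]
    exact Finset.sum_congr rfl (fun y _ => perm_sum_div x y Y)
  rw [Finset.sum_congr rfl hstep]
  rw [← Finset.sum_fiberwise_of_maps_to
    (g := wt) (t := Finset.range (n + 1)) (fun x _ => Finset.mem_range.mpr (Nat.lt_succ_of_le (wt_le x))) _]
  refine Finset.sum_congr rfl (fun d1 _ => ?_)
  have hinner : ∀ x ∈ C1.filter (fun c => wt c = d1),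
      (∑ y ∈ C2, ∑ k ∈ Finset.Icc (wt x + wt y - n) (min (wt x) (wt y)),
          (((wt y).choose k * (n - wt y).choose (wt x - k) : ℝ)
              / (n.choose (wt x) : ℝ))
            * Y ^ (wt x + 2 * wt y - 2 * k))
        = ∑ y ∈ C2, ∑ k ∈ Finset.Icc (d1 + wt y - n) (min d1 (wt y)),
            (((wt y).choose k * (n - wt y).choose (d1 - k) : ℝ)
                / (n.choose d1 : ℝ))
              * Y ^ (d1 + 2 * wt y - 2 * k) := by
    intro x hx
    rw [Finset.mem_filter] at hx
    rw [hx.2]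
  rw [Finset.sum_congr rfl hinner, Finset.sum_const, nsmul_eq_mul]
  rw [← Finset.sum_fiberwise_of_maps_to
    (g := wt) (t := Finset.range (n + 1)) (fun y _ => Finset.mem_range.mpr (Nat.lt_succ_of_le (wt_le y)))
    (fun y => ∑ k ∈ Finset.Icc (d1 + wt y - n) (min d1 (wt y)),
            (((wt y).choose k * (n - wt y).choose (d1 - k) : ℝ)
                / (n.choose d1 : ℝ))
              * Y ^ (d1 + 2 * wt y - 2 * k))]
  rw [Finset.mul_sum]
  refine Finset.sum_congr rfl (fun d2 _ => ?_)
  have hinner2 : ∀ y ∈ C2.filter (fun c => wt c = d2),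
      (∑ k ∈ Finset.Icc (d1 + wt y - n) (min d1 (wt y)),
          (((wt y).choose k * (n - wt y).choose (d1 - k) : ℝ)
              / (n.choose d1 : ℝ))
            * Y ^ (d1 + 2 * wt y - 2 * k))
        = ∑ k ∈ Finset.Icc (d1 + d2 - n) (min d1 d2),
            ((d2.choose k * (n - d2).choose (d1 - k) : ℝ) / (n.choose d1 : ℝ))
              * Y ^ (d1 + 2 * d2 - 2 * k) := by
    intro y hy
    rw [Finset.mem_filter] at hy
    rw [hy.2]
  rw [Finset.sum_congr rfl hinner2, Finset.sum_const, nsmul_eq_mul]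
  ring
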